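/- arXiv:1809.06572 — 2 statements merged into one kernel-verified Lean document; each statement's English description precedes it below -/
import Mathlib

section
/- Let g be a càdlàg function on [a,b] and let ḡ be the function equal to g(a) on [a,b) and g(b) at b. Then the Skorokhod M2 distance between g and ḡ on [a,b] is at most (b-a) + min(A,B), where A = sup_{t∈[a,b]}(g(a)-g(t)) + sup_{t∈[a,b]}(g(t)-g(b)) and B = sup_{t∈[a,b]}(g(t)-g(a)) + sup_{t∈[a,b]}(g(b)-g(t)). -/
open Set Function MeasureTheory Filter
open scoped ENNReal Topology

/-- The completed graph of a càdlàg function `g` on `[a,b]`, with the convention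
`g(a⁻) = g(a)`:  `Γ(g) = {(t,s) : t ∈ [a,b], s = α g(t⁻) + (1-α) g(t), α ∈ [0,1]}`. -/
def completedGraph (a b : ℝ) (g : ℝ → ℝ) : Set (ℝ × ℝ) :=
  {p | p.1 ∈ Set.Icc a b ∧ ∃ α ∈ Set.Icc (0:ℝ) 1,
    p.2 = α * (if p.1 = a then g a else Function.leftLim g p.1) + (1 - α) * g p.1}

/-- One-sided Hausdorff-type distance between completed graphs, with the taxicab norm
`‖(t₁,s₁) - (t₂,s₂)‖ = |t₁ - t₂| + |s₁ - s₂|`. -/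
noncomputable def graphRho (Γ₁ Γ₂ : Set (ℝ × ℝ)) : ℝ≥0∞ :=
  ⨆ p ∈ Γ₁, ⨅ q ∈ Γ₂, ENNReal.ofReal (|p.1 - q.1| + |p.2 - q.2|)

/-- The Skorokhod `M₂` distance between two càdlàg functions on `[a,b]`. -/
noncomputable def dM2 (a b : ℝ) (g₁ g₂ : ℝ → ℝ) : ℝ≥0∞ :=
  max (graphRho (completedGraph a b g₁) (completedGraph a b g₂))
      (graphRho (completedGraph a b g₂) (completedGraph a b g₁))

/-- Extract a convex-combination coefficient for a point between two reals. -/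
lemma aux_alpha {c d y : ℝ} (h1 : min c d ≤ y) (h2 : y ≤ max c d) :
    ∃ α ∈ Set.Icc (0:ℝ) 1, y = α * c + (1 - α) * d := by
  rcases le_total c d with h | h
  · have hy : y ∈ segment ℝ c d := by
      rw [segment_eq_Icc h]
      exact ⟨by simpa [min_eq_left h] using h1, by simpa [max_eq_right h] using h2⟩
    obtain ⟨α, β, hα, hβ, hs, he⟩ := hy
    refine ⟨α, ⟨hα, by linarith⟩, ?_⟩
    simp only [smul_eq_mul] at he
    have hβ' : β = 1 - α := by linarith
    rw [hβ'] at he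
    linarith
  · have hy : y ∈ segment ℝ d c := by
      rw [segment_eq_Icc h]
      exact ⟨by simpa [min_eq_right h] using h1, by simpa [max_eq_left h] using h2⟩
    obtain ⟨β, α, hβ, hα, hs, he⟩ := hy
    refine ⟨α, ⟨hα, by linarith⟩, ?_⟩
    simp only [smul_eq_mul] at he
    have hβ' : β = 1 - α := by linarith
    rw [hβ'] at he
    linarith

/-- Upcrossing lemma: a càdlàg-type function attains (in the completed-graph sense)
every level between `g a` and `g b`. -/
lemma aux_cross_up (a b : ℝ) (hab : a ≤ b) (g l : ℝ → ℝ)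
    (hr : ∀ t ∈ Set.Ico a b, ContinuousWithinAt g (Set.Ici t) t)
    (hl : ∀ t ∈ Set.Ioc a b, Tendsto g (𝓝[<] t) (𝓝 (l t)))
    (y : ℝ) (hy1 : g a ≤ y) (hy2 : y ≤ g b) :
    ∃ t ∈ Set.Icc a b, g t = y ∨ (a < t ∧ l t ≤ y ∧ y ≤ g t) := by
  set E : Set ℝ := {t | t ∈ Set.Icc a b ∧ g t ≤ y} with hE
  have haE : a ∈ E := ⟨⟨le_refl a, hab⟩, hy1⟩
  have hbdd : BddAbove E := ⟨b, fun t ht => ht.1.2⟩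
  have hne : E.Nonempty := ⟨a, haE⟩
  set t₀ := sSup E with ht₀def
  have ht₀ : t₀ ∈ Set.Icc a b := ⟨le_csSup hbdd haE, csSup_le hne fun t ht => ht.1.2⟩
  rcases lt_trichotomy (g t₀) y with hlt | heq | hgt
  · exfalso
    have ht₀b : t₀ < b := by
      rcases eq_or_lt_of_le ht₀.2 with h | h
      · rw [h] at hlt; linarith
      · exact h
    have hev : g ⁻¹' Set.Iio y ∈ 𝓝[Set.Ici t₀] t₀ := (hr t₀ ⟨ht₀.1, ht₀b⟩) (Iio_mem_nhds hlt)
    rw [mem_nhdsGE_iff_exists_Ico_subset] at hev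
    obtain ⟨u, hu, hsub⟩ := hev
    have hu' : t₀ < u := hu
    set t₁ := min ((t₀ + u) / 2) b with ht₁def
    have h1 : t₀ < t₁ := lt_min (by linarith) ht₀b
    have h2 : t₁ < u := lt_of_le_of_lt (min_le_left _ _) (by linarith)
    have ht₁E : t₁ ∈ E := ⟨⟨ht₀.1.trans h1.le, min_le_right _ _⟩,
      le_of_lt (hsub ⟨h1.le, h2⟩)⟩
    exact absurd (le_csSup hbdd ht₁E) (not_le.2 h1)
  · exact ⟨t₀, ht₀, Or.inl heq⟩
  · have hat₀ : a < t₀ := by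
      rcases eq_or_lt_of_le ht₀.1 with h | h
      · rw [← h] at hgt; linarith
      · exact h
    have hly : l t₀ ≤ y := by
      by_contra hc
      push_neg at hc
      have hev : g ⁻¹' Set.Ioi y ∈ 𝓝[<] t₀ := (hl t₀ ⟨hat₀, ht₀.2⟩) (Ioi_mem_nhds hc)
      rw [mem_nhdsLT_iff_exists_Ioo_subset] at hev
      obtain ⟨c, hc', hsub⟩ := hev
      obtain ⟨s, hsE, hs⟩ := exists_lt_of_lt_csSup hne
        (show max c a < sSup E from max_lt hc' hat₀)
      have hst : s < t₀ := by
        rcases eq_or_lt_of_le (le_csSup hbdd hsE) with h | h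
        · exfalso; rw [h] at hsE; exact absurd hsE.2 (not_le.2 hgt)
        · exact h
      exact absurd hsE.2 (not_le.2 (hsub ⟨lt_of_le_of_lt (le_max_left c a) hs, hst⟩))
    exact ⟨t₀, ht₀, Or.inr ⟨hat₀, hly, hgt.le⟩⟩

/-- A càdlàg function is bounded on a compact interval. -/
lemma aux_bdd (a b : ℝ) (hab : a ≤ b) (g : ℝ → ℝ)
    (hr : ∀ t ∈ Set.Ico a b, ContinuousWithinAt g (Set.Ici t) t)
    (hl : ∀ t ∈ Set.Ioc a b, Tendsto g (𝓝[<] t) (𝓝 (Function.leftLim g t))) :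
    ∃ M, ∀ t ∈ Set.Icc a b, |g t| ≤ M := by
  set E : Set ℝ := {t | t ∈ Set.Icc a b ∧ ∃ M, ∀ u ∈ Set.Icc a t, |g u| ≤ M} with hE
  have haE : a ∈ E := ⟨⟨le_refl a, hab⟩, |g a|, fun u hu => by
    have h : u = a := le_antisymm hu.2 hu.1
    rw [h]⟩
  have hbdd : BddAbove E := ⟨b, fun t ht => ht.1.2⟩
  have hne : E.Nonempty := ⟨a, haE⟩
  set c := sSup E with hcdef
  have hc : c ∈ Set.Icc a b := ⟨le_csSup hbdd haE, csSup_le hne fun t ht => ht.1.2⟩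
  have hcE : ∃ M, ∀ u ∈ Set.Icc a c, |g u| ≤ M := by
    rcases eq_or_lt_of_le hc.1 with h | h
    · refine ⟨|g a|, fun u hu => ?_⟩
      have h2 : u = a := le_antisymm (by rw [h]; exact hu.2) hu.1
      rw [h2]
    · set L := Function.leftLim g c with hL
      have hT := hl c ⟨h, hc.2⟩
      have hev : g ⁻¹' Set.Ioo (L - 1) (L + 1) ∈ 𝓝[<] c :=
        hT (Ioo_mem_nhds (by linarith) (by linarith))
      rw [mem_nhdsLT_iff_exists_Ioo_subset] at hev
      obtain ⟨c', hc', hsub⟩ := hev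
      obtain ⟨s, hsE, hs⟩ := exists_lt_of_lt_csSup hne
        (show max c' a < sSup E from max_lt hc' h)
      obtain ⟨Ms, hMs⟩ := hsE.2
      refine ⟨max Ms (max (|L| + 1) (|g c|)), fun u hu => ?_⟩
      rcases le_or_gt u s with h1 | h1
      · exact le_trans (hMs u ⟨hu.1, h1⟩) (le_max_left _ _)
      · rcases eq_or_lt_of_le hu.2 with h2 | h2
        · rw [h2]
          exact le_trans (le_max_right _ _) (le_max_right _ _)
        · have hmem : g u ∈ Set.Ioo (L - 1) (L + 1) :=
            hsub ⟨lt_of_le_of_lt (le_max_left c' a) (lt_of_lt_of_le hs h1.le), h2⟩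
          have habs : |g u| ≤ |L| + 1 := by
            rw [abs_le]
            constructor
            · linarith [neg_abs_le L, hmem.1]
            · linarith [le_abs_self L, hmem.2]
          exact habs.trans ((le_max_left _ _).trans (le_max_right _ _))
  have hcb : c = b := by
    by_contra hne'
    have hcb' : c < b := lt_of_le_of_ne hc.2 hne'
    have hT := hr c ⟨hc.1, hcb'⟩
    have hev : g ⁻¹' Set.Ioo (g c - 1) (g c + 1) ∈ 𝓝[Set.Ici c] c :=
      hT (Ioo_mem_nhds (by linarith) (by linarith))
    rw [mem_nhdsGE_iff_exists_Ico_subset] at hev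
    obtain ⟨u, hu, hsub⟩ := hev
    have hu' : c < u := hu
    obtain ⟨Mc, hMc⟩ := hcE
    set t₁ := min ((c + u) / 2) b with ht₁
    have h1 : c < t₁ := lt_min (by linarith) hcb'
    have h2 : t₁ < u := lt_of_le_of_lt (min_le_left _ _) (by linarith)
    have ht₁E : t₁ ∈ E := by
      refine ⟨⟨hc.1.trans h1.le, min_le_right _ _⟩, max Mc (|g c| + 1), fun v hv => ?_⟩
      rcases le_or_gt v c with h3 | h3
      · exact (hMc v ⟨hv.1, h3⟩).trans (le_max_left _ _)
      · have hmem : g v ∈ Set.Ioo (g c - 1) (g c + 1) := hsub ⟨h3.le, lt_of_le_of_lt hv.2 h2⟩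
        have habs : |g v| ≤ |g c| + 1 := by
          rw [abs_le]
          constructor
          · linarith [neg_abs_le (g c), hmem.1]
          · linarith [le_abs_self (g c), hmem.2]
        exact habs.trans (le_max_right _ _)
    exact absurd (le_csSup hbdd ht₁E) (not_le.2 h1)
  obtain ⟨M, hM⟩ := hcE
  exact ⟨M, fun t ht => hM t ⟨ht.1, hcb ▸ ht.2⟩⟩

/-- If `g` is càdlàg on `[a,b]` and `gbar = g(a)·1_{[a,b)} + g(b)·1_{{b}}`, then
`d_{M₂,[a,b]}(g, gbar) ≤ (b - a) + A ∧ B`. -/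
theorem stmt0 (a b : ℝ) (hab : a ≤ b) (g : ℝ → ℝ)
    (hright : ∀ t ∈ Set.Ico a b, ContinuousWithinAt g (Set.Ici t) t)
    (hleft : ∀ t ∈ Set.Ioc a b,
      Filter.Tendsto g (nhdsWithin t (Set.Iio t)) (nhds (Function.leftLim g t)))
    (gbar : ℝ → ℝ) (hgbar : ∀ t, gbar t = if t = b then g b else g a)
    (A B : ℝ)
    (hA : A = (⨆ t : Set.Icc a b, (g a - g ↑t)) + (⨆ t : Set.Icc a b, (g ↑t - g b)))
    (hB : B = (⨆ t : Set.Icc a b, (g ↑t - g a)) + (⨆ t : Set.Icc a b, (g b - g ↑t))) :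
    dM2 a b g gbar ≤ ENNReal.ofReal ((b - a) + min A B) := by
  rcases eq_or_lt_of_le hab with rfl | hab'
  · -- degenerate case a = b
    have hgbar' : ∀ t, gbar t = g a := fun t => by rw [hgbar t, ite_self]
    refine le_trans (max_le ?_ ?_) (zero_le)
    · refine iSup₂_le ?_
      rintro ⟨t, s⟩ ⟨hp1, α, hα, hval⟩
      have hpa : t = a := le_antisymm hp1.2 hp1.1
      have hp2 : s = g a := by
        rw [show ((t, s).2 : ℝ) = s from rfl] at hval
        rw [hval, if_pos hpa]
        rw [show ((t, s).1 : ℝ) = t from rfl, hpa]; ring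
      have hq : ((a, g a) : ℝ × ℝ) ∈ completedGraph a a gbar := by
        refine ⟨⟨le_refl a, le_refl a⟩, 0, ⟨le_refl 0, zero_le_one⟩, ?_⟩
        simp [hgbar']
      refine le_trans (iInf₂_le ((a, g a) : ℝ × ℝ) hq) ?_
      simp [hpa, hp2]
    · refine iSup₂_le ?_
      rintro ⟨t, s⟩ ⟨hp1, α, hα, hval⟩
      have hpa : t = a := le_antisymm hp1.2 hp1.1
      have hp2 : s = g a := by
        rw [show ((t, s).2 : ℝ) = s from rfl] at hval
        rw [hval, if_pos hpa]
        rw [show ((t, s).1 : ℝ) = t from rfl, hpa, hgbar']; ring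
      have hq : ((a, g a) : ℝ × ℝ) ∈ completedGraph a a g := by
        refine ⟨⟨le_refl a, le_refl a⟩, 0, ⟨le_refl 0, zero_le_one⟩, ?_⟩
        simp
      refine le_trans (iInf₂_le ((a, g a) : ℝ × ℝ) hq) ?_
      simp [hpa, hp2]
  -- main case a < b
  obtain ⟨M, hM⟩ := aux_bdd a b hab g hright hleft
  set K := g '' Set.Icc a b with hK
  have hKne : K.Nonempty := ⟨g a, a, Set.left_mem_Icc.2 hab, rfl⟩
  have hKba : BddAbove K := ⟨M, by rintro x ⟨t, ht, rfl⟩; exact (abs_le.1 (hM t ht)).2⟩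
  have hKbb : BddBelow K := ⟨-M, by rintro x ⟨t, ht, rfl⟩; exact (abs_le.1 (hM t ht)).1⟩
  set S := sSup K with hS
  set I := sInf K with hI
  have hgS : ∀ t ∈ Set.Icc a b, g t ≤ S := fun t ht => le_csSup hKba ⟨t, ht, rfl⟩
  have hIg : ∀ t ∈ Set.Icc a b, I ≤ g t := fun t ht => csInf_le hKbb ⟨t, ht, rfl⟩
  have hLS : ∀ t ∈ Set.Ioc a b, Function.leftLim g t ≤ S := by
    intro t ht
    refine le_of_tendsto (hleft t ht) ?_
    filter_upwards [Ioo_mem_nhdsLT_of_mem (show t ∈ Set.Ioc a t from ⟨ht.1, le_refl t⟩)]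
      with u hu
    exact hgS u ⟨hu.1.le, hu.2.le.trans ht.2⟩
  have hIL : ∀ t ∈ Set.Ioc a b, I ≤ Function.leftLim g t := by
    intro t ht
    refine ge_of_tendsto (hleft t ht) ?_
    filter_upwards [Ioo_mem_nhdsLT_of_mem (show t ∈ Set.Ioc a t from ⟨ht.1, le_refl t⟩)]
      with u hu
    exact hIg u ⟨hu.1.le, hu.2.le.trans ht.2⟩
  haveI : Nonempty (Set.Icc a b) := ⟨⟨a, Set.left_mem_Icc.2 hab⟩⟩
  set A1 := ⨆ t : Set.Icc a b, (g a - g ↑t) with hA1def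
  set A2 := ⨆ t : Set.Icc a b, (g ↑t - g b) with hA2def
  set B1 := ⨆ t : Set.Icc a b, (g ↑t - g a) with hB1def
  set B2 := ⨆ t : Set.Icc a b, (g b - g ↑t) with hB2def
  have hbA1 : BddAbove (Set.range fun t : Set.Icc a b => g a - g ↑t) :=
    ⟨g a - I, by rintro x ⟨t, rfl⟩; have := hIg t t.2; simp only []; linarith⟩
  have hbA2 : BddAbove (Set.range fun t : Set.Icc a b => g ↑t - g b) :=
    ⟨S - g b, by rintro x ⟨t, rfl⟩; have := hgS t t.2; simp only []; linarith⟩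
  have hbB1 : BddAbove (Set.range fun t : Set.Icc a b => g ↑t - g a) :=
    ⟨S - g a, by rintro x ⟨t, rfl⟩; have := hgS t t.2; simp only []; linarith⟩
  have hbB2 : BddAbove (Set.range fun t : Set.Icc a b => g b - g ↑t) :=
    ⟨g b - I, by rintro x ⟨t, rfl⟩; have := hIg t t.2; simp only []; linarith⟩
  have hA1le : ∀ t : Set.Icc a b, g a - g ↑t ≤ A1 := fun t => le_ciSup hbA1 t
  have hA2le : ∀ t : Set.Icc a b, g ↑t - g b ≤ A2 := fun t => le_ciSup hbA2 t
  have hB1le : ∀ t : Set.Icc a b, g ↑t - g a ≤ B1 := fun t => le_ciSup hbB1 t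
  have hB2le : ∀ t : Set.Icc a b, g b - g ↑t ≤ B2 := fun t => le_ciSup hbB2 t
  have hIA1 : g a - A1 ≤ I :=
    le_csInf hKne (by rintro x ⟨t, ht, rfl⟩; have := hA1le ⟨t, ht⟩; simp only [] at this; linarith)
  have hSA2 : S ≤ g b + A2 :=
    csSup_le hKne (by rintro x ⟨t, ht, rfl⟩; have := hA2le ⟨t, ht⟩; simp only [] at this; linarith)
  have hSB1 : S ≤ g a + B1 :=
    csSup_le hKne (by rintro x ⟨t, ht, rfl⟩; have := hB1le ⟨t, ht⟩; simp only [] at this; linarith)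
  have hIB2 : g b - B2 ≤ I :=
    le_csInf hKne (by rintro x ⟨t, ht, rfl⟩; have := hB2le ⟨t, ht⟩; simp only [] at this; linarith)
  have hA1x : ∀ x, I ≤ x → g a - x ≤ A1 := fun x hx => by linarith
  have hA2x : ∀ x, x ≤ S → x - g b ≤ A2 := fun x hx => by linarith
  have hB1x : ∀ x, x ≤ S → x - g a ≤ B1 := fun x hx => by linarith
  have hB2x : ∀ x, I ≤ x → g b - x ≤ B2 := fun x hx => by linarith
  have hA1n : 0 ≤ A1 := by
    have := hA1le ⟨a, Set.left_mem_Icc.2 hab⟩; simp only [] at this; linarith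
  have hA2n : 0 ≤ A2 := by
    have := hA2le ⟨b, Set.right_mem_Icc.2 hab⟩; simp only [] at this; linarith
  have hB1n : 0 ≤ B1 := by
    have := hB1le ⟨a, Set.left_mem_Icc.2 hab⟩; simp only [] at this; linarith
  have hB2n : 0 ≤ B2 := by
    have := hB2le ⟨b, Set.right_mem_Icc.2 hab⟩; simp only [] at this; linarith
  have hminAB : 0 ≤ min A B := le_min (by rw [hA]; linarith) (by rw [hB]; linarith)
  -- description of gbar and its completed graph
  have hgbar_lt : ∀ t, t ≠ b → gbar t = g a := fun t h => by rw [hgbar, if_neg h]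
  have hgbarb : gbar b = g b := by rw [hgbar, if_pos rfl]
  have hLgbar : ∀ t ∈ Set.Ioc a b, Function.leftLim gbar t = g a := by
    intro t ht
    have hevlt : (fun _ : ℝ => g a) =ᶠ[𝓝[<] t] gbar := by
      filter_upwards [self_mem_nhdsWithin] with u hu
      exact (hgbar_lt u (ne_of_lt (lt_of_lt_of_le hu ht.2))).symm
    exact leftLim_eq_of_tendsto
      (tendsto_const_nhds.congr' hevlt)
  have hM1 : ∀ t ∈ Set.Icc a b, ((t, g a) : ℝ × ℝ) ∈ completedGraph a b gbar := by
    intro t ht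
    rcases eq_or_lt_of_le ht.2 with h | h
    · refine ⟨ht, 1, ⟨zero_le_one, le_refl 1⟩, ?_⟩
      show g a = 1 * (if t = a then gbar a else Function.leftLim gbar t) + (1 - 1) * gbar t
      rw [if_neg (by rw [h]; exact hab'.ne'), h, hLgbar b ⟨hab', le_refl b⟩]; ring
    · refine ⟨ht, 0, ⟨le_refl 0, zero_le_one⟩, ?_⟩
      show g a = 0 * (if t = a then gbar a else Function.leftLim gbar t) + (1 - 0) * gbar t
      rw [hgbar_lt t (ne_of_lt h)]; ring
  have hM2 : ∀ y, min (g a) (g b) ≤ y → y ≤ max (g a) (g b) →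
      ((b, y) : ℝ × ℝ) ∈ completedGraph a b gbar := by
    intro y h1 h2
    obtain ⟨α, hα, hy⟩ := aux_alpha h1 h2
    refine ⟨Set.right_mem_Icc.2 hab, α, hα, ?_⟩
    show y = α * (if b = a then gbar a else Function.leftLim gbar b) + (1 - α) * gbar b
    rw [if_neg hab'.ne', hLgbar b ⟨hab', le_refl b⟩, hgbarb]
    exact hy
  -- level crossing for g
  have hcross : ∀ y, min (g a) (g b) ≤ y → y ≤ max (g a) (g b) →
      ∃ t ∈ Set.Icc a b, ((t, y) : ℝ × ℝ) ∈ completedGraph a b g := by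
    intro y h1 h2
    rcases le_total (g a) (g b) with hc | hc
    · obtain ⟨t, ht, hres⟩ := aux_cross_up a b hab g (Function.leftLim g) hright hleft y
        (by rw [min_eq_left hc] at h1; exact h1) (by rw [max_eq_right hc] at h2; exact h2)
      rcases hres with h | ⟨hat, hl1, hl2⟩
      · refine ⟨t, ht, ht, 0, ⟨le_refl 0, zero_le_one⟩, ?_⟩
        show y = 0 * (if t = a then g a else Function.leftLim g t) + (1 - 0) * g t
        rw [h]; ring
      · obtain ⟨α, hα, hy⟩ := aux_alpha (c := Function.leftLim g t) (d := g t)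
          (le_trans (min_le_left _ _) hl1) (le_trans hl2 (le_max_right _ _))
        refine ⟨t, ht, ht, α, hα, ?_⟩
        show y = α * (if t = a then g a else Function.leftLim g t) + (1 - α) * g t
        rw [if_neg hat.ne']
        exact hy
    · have hr' : ∀ t ∈ Set.Ico a b, ContinuousWithinAt (fun u => -g u) (Set.Ici t) t :=
        fun t ht => (hright t ht).neg
      have hl' : ∀ t ∈ Set.Ioc a b,
          Tendsto (fun u => -g u) (𝓝[<] t) (𝓝 (-(Function.leftLim g t))) :=
        fun t ht => (hleft t ht).neg
      obtain ⟨t, ht, hres⟩ := aux_cross_up a b hab (fun u => -g u)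
        (fun u => -(Function.leftLim g u)) hr' hl' (-y)
        (by show -g a ≤ -y; rw [max_eq_left hc] at h2; linarith)
        (by show -y ≤ -g b; rw [min_eq_right hc] at h1; linarith)
      rcases hres with h | ⟨hat, hl1, hl2⟩
      · have h' : g t = y := by linarith
        refine ⟨t, ht, ht, 0, ⟨le_refl 0, zero_le_one⟩, ?_⟩
        show y = 0 * (if t = a then g a else Function.leftLim g t) + (1 - 0) * g t
        rw [h']; ring
      · have hgt : g t ≤ y := by linarith
        have hyl : y ≤ Function.leftLim g t := by linarith
        obtain ⟨α, hα, hy⟩ := aux_alpha (c := Function.leftLim g t) (d := g t)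
          (le_trans (min_le_right _ _) hgt) (le_trans hyl (le_max_left _ _))
        refine ⟨t, ht, ht, α, hα, ?_⟩
        show y = α * (if t = a then g a else Function.leftLim g t) + (1 - α) * g t
        rw [if_neg hat.ne']
        exact hy
  have habs_tb : ∀ t ∈ Set.Icc a b, |t - b| ≤ b - a := by
    intro t ht
    rw [abs_le]
    constructor
    · linarith [ht.1]
    · linarith [ht.2, hab]
  -- first direction
  have rho1 : graphRho (completedGraph a b g) (completedGraph a b gbar) ≤
      ENNReal.ofReal ((b - a) + min A B) := by
    refine iSup₂_le ?_
    rintro ⟨t, s⟩ ⟨hp1, α, hα, hval⟩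
    simp only [] at hp1 hval
    set V := if t = a then g a else Function.leftLim g t with hV
    have hVI : I ≤ V ∧ V ≤ S := by
      rw [hV]; split_ifs with h
      · exact ⟨hIg a (Set.left_mem_Icc.2 hab), hgS a (Set.left_mem_Icc.2 hab)⟩
      · have hta : a < t := lt_of_le_of_ne hp1.1 (Ne.symm h)
        exact ⟨hIL t ⟨hta, hp1.2⟩, hLS t ⟨hta, hp1.2⟩⟩
    have hgt : I ≤ g t ∧ g t ≤ S := ⟨hIg t hp1, hgS t hp1⟩
    have hsI : I ≤ s := by
      nlinarith [mul_nonneg hα.1 (sub_nonneg.2 hVI.1),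
        mul_nonneg (sub_nonneg.2 hα.2) (sub_nonneg.2 hgt.1)]
    have hsS : s ≤ S := by
      nlinarith [mul_nonneg hα.1 (sub_nonneg.2 hVI.2),
        mul_nonneg (sub_nonneg.2 hα.2) (sub_nonneg.2 hgt.2)]
    rcases le_or_gt s (max (g a) (g b)) with hsmax | hsmax
    · rcases le_or_gt (min (g a) (g b)) s with hsmin | hsmin
      · refine le_trans (iInf₂_le ((b, s) : ℝ × ℝ) (hM2 s hsmin hsmax)) ?_
        apply ENNReal.ofReal_le_ofReal
        show |t - b| + |s - s| ≤ (b - a) + min A B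
        have h1 := habs_tb t hp1
        simp only [sub_self, abs_zero]
        linarith
      · -- s < min (g a) (g b)
        rcases le_total A B with hAB | hAB
        · rw [min_eq_left hAB]
          refine le_trans (iInf₂_le ((t, g a) : ℝ × ℝ) (hM1 t hp1)) ?_
          apply ENNReal.ofReal_le_ofReal
          show |t - t| + |s - g a| ≤ (b - a) + A
          have h1 : |s - g a| = g a - s := by
            rw [abs_of_nonpos (by linarith [lt_of_lt_of_le hsmin (min_le_left (g a) (g b))])]
            ring
          have h2 := hA1x s hsI
          simp only [sub_self, abs_zero]
          rw [h1, hA]; linarith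
        · rw [min_eq_right hAB]
          refine le_trans (iInf₂_le ((b, g b) : ℝ × ℝ)
            (hM2 (g b) (min_le_right _ _) (le_max_right _ _))) ?_
          apply ENNReal.ofReal_le_ofReal
          show |t - b| + |s - g b| ≤ (b - a) + B
          have h1 := habs_tb t hp1
          have h2 : |s - g b| = g b - s := by
            rw [abs_of_nonpos (by linarith [lt_of_lt_of_le hsmin (min_le_right (g a) (g b))])]
            ring
          have h3 := hB2x s hsI
          rw [h2, hB]; linarith
    · -- s > max (g a) (g b)
      rcases le_total A B with hAB | hAB
      · rw [min_eq_left hAB]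
        refine le_trans (iInf₂_le ((b, g b) : ℝ × ℝ)
          (hM2 (g b) (min_le_right _ _) (le_max_right _ _))) ?_
        apply ENNReal.ofReal_le_ofReal
        show |t - b| + |s - g b| ≤ (b - a) + A
        have h1 := habs_tb t hp1
        have h2 : |s - g b| = s - g b := by
          rw [abs_of_nonneg (by linarith [lt_of_le_of_lt (le_max_right (g a) (g b)) hsmax])]
        have h3 := hA2x s hsS
        rw [h2, hA]; linarith
      · rw [min_eq_right hAB]
        refine le_trans (iInf₂_le ((t, g a) : ℝ × ℝ) (hM1 t hp1)) ?_
        apply ENNReal.ofReal_le_ofReal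
        show |t - t| + |s - g a| ≤ (b - a) + B
        have h2 : |s - g a| = s - g a := by
          rw [abs_of_nonneg (by linarith [lt_of_le_of_lt (le_max_left (g a) (g b)) hsmax])]
        have h3 := hB1x s hsS
        simp only [sub_self, abs_zero]
        rw [h2, hB]; linarith
  -- second direction
  have rho2 : graphRho (completedGraph a b gbar) (completedGraph a b g) ≤
      ENNReal.ofReal ((b - a) + min A B) := by
    refine iSup₂_le ?_
    rintro ⟨t, s⟩ ⟨hp1, α, hα, hval⟩
    simp only [] at hp1 hval
    rcases eq_or_lt_of_le hp1.2 with htb | htb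
    · -- t = b
      rw [htb, if_neg hab'.ne', hLgbar b ⟨hab', le_refl b⟩, hgbarb] at hval
      have hmin : min (g a) (g b) ≤ s := by
        nlinarith [mul_nonneg hα.1 (sub_nonneg.2 (min_le_left (g a) (g b))),
          mul_nonneg (sub_nonneg.2 hα.2) (sub_nonneg.2 (min_le_right (g a) (g b)))]
      have hmax : s ≤ max (g a) (g b) := by
        nlinarith [mul_nonneg hα.1 (sub_nonneg.2 (le_max_left (g a) (g b))),
          mul_nonneg (sub_nonneg.2 hα.2) (sub_nonneg.2 (le_max_right (g a) (g b)))]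
      obtain ⟨t', ht', hq⟩ := hcross s hmin hmax
      refine le_trans (iInf₂_le ((t', s) : ℝ × ℝ) hq) ?_
      apply ENNReal.ofReal_le_ofReal
      show |t - t'| + |s - s| ≤ (b - a) + min A B
      have h1 : |t - t'| ≤ b - a := by
        rw [abs_le]
        constructor
        · linarith [ht'.2, htb.le, hp1.1]
        · linarith [ht'.1, htb]
      simp only [sub_self, abs_zero]
      linarith
    · -- t < b
      have hs : s = g a := by
        have h2 : gbar t = g a := hgbar_lt t (ne_of_lt htb)
        by_cases hta : t = a
        · rw [hval, if_pos hta, hgbar_lt a (ne_of_lt hab'), h2]; ring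
        · have hta' : a < t := lt_of_le_of_ne hp1.1 (Ne.symm hta)
          rw [hval, if_neg hta, hLgbar t ⟨hta', htb.le⟩, h2]; ring
      have hq : ((a, g a) : ℝ × ℝ) ∈ completedGraph a b g := by
        refine ⟨Set.left_mem_Icc.2 hab, 0, ⟨le_refl 0, zero_le_one⟩, ?_⟩
        simp
      refine le_trans (iInf₂_le ((a, g a) : ℝ × ℝ) hq) ?_
      apply ENNReal.ofReal_le_ofReal
      show |t - a| + |s - g a| ≤ (b - a) + min A B
      have h1 : |t - a| ≤ b - a := by
        rw [abs_le]
        constructor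
        · linarith [hp1.1, hab]
        · linarith [htb.le, hp1.1]
      rw [hs]
      simp only [sub_self, abs_zero]
      linarith
  exact max_le rho1 rho2
end

section
/- Let τ_k = Σ_{j=0}^{k-1} τ ∘ F^j for an integrable function τ: Y → ℤ⁺ with mean \bar τ on a probability space with measure-preserving F, and let N_n be the lap number: N_n(y) = max{k : τ_k(y) ≤ n}. Let b_n → ∞ with inf_n b_n/b_{[n/\bar τ + c b_n]} > 0 for each c > 0. If b_n^{-1}(τ_n − n\bar τ) → 0 in probability, then b_n^{-1}(N_n − [n/\bar τ]) → 0 in probability. -/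
open MeasureTheory Filter Set Topology

set_option maxHeartbeats 1000000

/-- If `b_n → ∞` with `inf_n b_n/b_{[n/τ̄ + c b_n]} > 0` for each `c > 0`, and
`b_n⁻¹(τ_n − n τ̄) → 0` in probability, then the lap number `N_n = max{k : τ_k ≤ n}`
satisfies `b_n⁻¹(N_n − [n/τ̄]) → 0` in probability. -/
theorem stmt13 {Y : Type*} [MeasurableSpace Y] (μ : Measure Y) [IsProbabilityMeasure μ]
    (F : Y → Y) (hF : MeasurePreserving F μ μ)
    (τ : Y → ℕ) (hτ1 : ∀ y, 1 ≤ τ y) (hint : Integrable (fun y => (τ y : ℝ)) μ)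
    (τbar : ℝ) (hτbar : τbar = ∫ y, (τ y : ℝ) ∂μ)
    (τsum : ℕ → Y → ℕ)
    (hτsum : ∀ k y, τsum k y = ∑ j ∈ Finset.range k, τ (F^[j] y))
    (N : ℕ → Y → ℕ) (hN : ∀ n y, N n y = sSup {k : ℕ | τsum k y ≤ n})
    (b : ℕ → ℝ) (hbpos : ∀ n, 0 < b n)
    (hb : Filter.Tendsto b Filter.atTop Filter.atTop)
    (hreg : ∀ c : ℝ, 0 < c → ∃ ε : ℝ, 0 < ε ∧ ∀ n : ℕ,
      ε ≤ b n / b (⌊(n : ℝ)/τbar + c * b n⌋₊))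
    (hτconv : TendstoInMeasure μ
      (fun (n : ℕ) y => ((τsum n y : ℝ) - (n : ℝ) * τbar) / b n) Filter.atTop 0) :
    TendstoInMeasure μ
      (fun (n : ℕ) y => ((N n y : ℝ) - (⌊(n : ℝ)/τbar⌋₊ : ℝ)) / b n) Filter.atTop 0 := by
  -- τbar ≥ 1
  have hτbar1 : (1:ℝ) ≤ τbar := by
    rw [hτbar]
    have h1 : (1:ℝ) = ∫ _, (1:ℝ) ∂μ := by simp
    rw [h1]
    exact integral_mono (integrable_const 1) hint (fun y => by simpa using hτ1 y)
  have hτbarpos : (0:ℝ) < τbar := lt_of_lt_of_le one_pos hτbar1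
  -- monotonicity of τsum with gap ≥ k - j
  have hmono : ∀ (y : Y) (j k : ℕ), j ≤ k → τsum j y + (k - j) ≤ τsum k y := by
    intro y j k hjk
    rw [hτsum j y, hτsum k y, Finset.range_eq_Ico, Finset.range_eq_Ico,
      ← Finset.sum_Ico_consecutive _ (Nat.zero_le j) hjk, ← Finset.range_eq_Ico]
    have h2 : k - j ≤ ∑ i ∈ Finset.Ico j k, τ (F^[i] y) := by
      calc k - j = ∑ _i ∈ Finset.Ico j k, 1 := by simp [Nat.card_Ico]
      _ ≤ _ := Finset.sum_le_sum (fun i _ => hτ1 _)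
    omega
  have hself : ∀ (y : Y) (k : ℕ), k ≤ τsum k y := by
    intro y k
    have h := hmono y 0 k (Nat.zero_le k)
    have h0 : τsum 0 y = 0 := by simp [hτsum]
    omega
  have hbdd : ∀ (n : ℕ) (y : Y), BddAbove {k : ℕ | τsum k y ≤ n} := by
    intro n y
    exact ⟨n, fun k hk => le_trans (hself y k) hk⟩
  have hne : ∀ (n : ℕ) (y : Y), Set.Nonempty {k : ℕ | τsum k y ≤ n} :=
    fun n y => ⟨0, by simp [hτsum]⟩
  have hNmem : ∀ (n : ℕ) (y : Y), τsum (N n y) y ≤ n := by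
    intro n y
    rw [hN]
    exact Nat.sSup_mem (hne n y) (hbdd n y)
  have hNle : ∀ (n : ℕ) (y : Y) (k : ℕ), τsum k y ≤ n → k ≤ N n y := by
    intro n y k hk
    rw [hN]
    exact le_csSup (hbdd n y) hk
  have hNsucc : ∀ (n : ℕ) (y : Y), n + 1 ≤ τsum (N n y + 1) y := by
    intro n y
    by_contra h
    push_neg at h
    have := hNle n y (N n y + 1) (by omega)
    omega
  -- main argument
  rw [tendstoInMeasure_iff_dist]
  intro δ hδ
  set c : ℝ := δ / (2 * τbar) with hc
  have hcpos : 0 < c := div_pos hδ (by positivity)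
  have hcτ : c * τbar = δ / 2 := by
    rw [hc]; field_simp
  obtain ⟨ε, hεpos, hε⟩ := hreg c hcpos
  set K : ℕ → ℕ := fun n => ⌊(n : ℝ)/τbar + c * b n⌋₊ with hKdef
  set η : ℝ := δ / 4 * ε with hη
  have hηpos : 0 < η := by positivity
  have hKtend : Tendsto K atTop atTop := by
    apply tendsto_nat_floor_atTop.comp
    exact tendsto_atTop_add_right_of_le _ 0
      (Tendsto.atTop_div_const hτbarpos tendsto_natCast_atTop_atTop)
      (fun n => mul_nonneg hcpos.le (hbpos n).le)
  -- eventual comparison of measures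
  have hbound : ∀ᶠ (n : ℕ) in atTop,
      μ {x | δ ≤ dist (((N n x : ℝ) - (⌊(n : ℝ)/τbar⌋₊ : ℝ)) / b n) ((0 : Y → ℝ) x)}
        ≤ μ {x | η ≤ dist (((τsum (K n) x : ℝ) - (K n : ℝ) * τbar) / b (K n)) ((0 : Y → ℝ) x)} := by
    filter_upwards [hb.eventually_ge_atTop (2/δ), hb.eventually_ge_atTop (4*τbar/δ)]
      with n hb1 hb2
    apply measure_mono
    intro y hy
    simp only [Set.mem_setOf_eq, Pi.zero_apply, Real.dist_eq, sub_zero] at hy ⊢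
    have hbn : 0 < b n := hbpos n
    have hbK : 0 < b (K n) := hbpos (K n)
    have hargnn : 0 ≤ (n:ℝ)/τbar + c * b n := by positivity
    have hKle : (K n : ℝ) ≤ (n:ℝ)/τbar + c * b n := Nat.floor_le hargnn
    have hKgt : (n:ℝ)/τbar + c * b n < (K n : ℝ) + 1 := Nat.lt_floor_add_one _
    have hflle : ((⌊(n:ℝ)/τbar⌋₊ : ℝ)) ≤ (n:ℝ)/τbar := Nat.floor_le (by positivity)
    have hfllt : (n:ℝ)/τbar < (⌊(n:ℝ)/τbar⌋₊ : ℝ) + 1 := Nat.lt_floor_add_one _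
    have hεb : ε * b (K n) ≤ b n := by
      have h := hε n
      rw [le_div_iff₀ hbK] at h
      exact h
    have hAT : (n:ℝ)/τbar * τbar = (n:ℝ) := div_mul_cancel₀ _ (ne_of_gt hτbarpos)
    have hcbT : c * b n * τbar = δ/2 * b n := by
      rw [← hcτ]; ring
    have h1b : (1:ℝ) ≤ δ/2 * b n := by
      have h := mul_le_mul_of_nonneg_left hb1 (le_of_lt (half_pos hδ))
      have h2 : δ/2 * (2/δ) = 1 := by field_simp
      linarith
    have hb2' : τbar ≤ δ/4 * b n := by
      have h := mul_le_mul_of_nonneg_left hb2 (by positivity : (0:ℝ) ≤ δ/4)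
      have h2 : δ/4 * (4*τbar/δ) = τbar := by field_simp
      linarith
    have hcδ : c ≤ δ/2 := by
      have h := mul_le_mul_of_nonneg_left hτbar1 hcpos.le
      rw [mul_one] at h
      linarith [hcτ, h]
    have hcbn : (0:ℝ) ≤ c * b n := by positivity
    -- |N - fl| ≥ δ b n
    have habs : δ * b n ≤ |(N n y : ℝ) - (⌊(n:ℝ)/τbar⌋₊ : ℝ)| := by
      rw [abs_div, abs_of_pos hbn, le_div_iff₀ hbn] at hy
      exact hy
    have key : δ/4 * b n ≤ |(τsum (K n) y : ℝ) - (K n : ℝ) * τbar| := by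
      rcases le_abs.mp habs with hcase | hcase
      · -- upper tail : N ≥ fl + δ b n
        have hKN : K n ≤ N n y := by
          have hcb : c * b n ≤ δ/2 * b n := mul_le_mul_of_nonneg_right hcδ hbn.le
          have h1 : (K n : ℝ) ≤ (N n y : ℝ) := by linarith
          exact_mod_cast h1
        have hτK : (τsum (K n) y : ℝ) ≤ (n : ℝ) := by
          have h2 : τsum (K n) y ≤ τsum (N n y) y := by
            have := hmono y (K n) (N n y) hKN; omega
          exact_mod_cast le_trans h2 (hNmem n y)
        have hdev : (τsum (K n) y : ℝ) - (K n : ℝ) * τbar ≤ -(δ/4 * b n) := by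
          have hprod : (0:ℝ) ≤ ((K n : ℝ) - ((n:ℝ)/τbar + c * b n - 1)) * τbar :=
            mul_nonneg (by linarith) hτbarpos.le
          have hexp : ((K n : ℝ) - ((n:ℝ)/τbar + c * b n - 1)) * τbar
              = (K n : ℝ) * τbar - (n:ℝ) - δ/2 * b n + τbar := by
            linear_combination (-1 : ℝ) * hAT - hcbT
          rw [hexp] at hprod
          linarith [hτK, hb2', hprod]
        rcases abs_cases ((τsum (K n) y : ℝ) - (K n : ℝ) * τbar) with ⟨he, _⟩ | ⟨he, _⟩
        · linarith
        · linarith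
      · -- lower tail : fl - N ≥ δ b n
        have hflN : δ * b n ≤ (⌊(n:ℝ)/τbar⌋₊ : ℝ) - (N n y : ℝ) := by linarith
        have hδb1 : (1:ℝ) ≤ δ * b n := by linarith [h1b, mul_nonneg hδ.le hbn.le]
        have hNfl : N n y + 1 ≤ ⌊(n:ℝ)/τbar⌋₊ := by
          have h1 : (N n y : ℝ) + 1 ≤ (⌊(n:ℝ)/τbar⌋₊ : ℝ) := by linarith
          exact_mod_cast h1
        have hflK : ⌊(n:ℝ)/τbar⌋₊ ≤ K n := Nat.floor_mono (by linarith)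
        have hNK : N n y + 1 ≤ K n := le_trans hNfl hflK
        have hsum : (n:ℝ) + (K n : ℝ) - (N n y : ℝ) ≤ (τsum (K n) y : ℝ) := by
          have h4 := hmono y (N n y + 1) (K n) hNK
          have h5 := hNsucc n y
          have h6 : n + (K n - N n y) ≤ τsum (K n) y := by omega
          have h7 : ((n + (K n - N n y) : ℕ) : ℝ) ≤ ((τsum (K n) y : ℕ) : ℝ) := by
            exact_mod_cast h6
          have hNK' : N n y ≤ K n := by omega
          push_cast [Nat.cast_sub hNK'] at h7
          linarith
        have hdev : δ/4 * b n ≤ (τsum (K n) y : ℝ) - (K n : ℝ) * τbar := by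
          have hprod : (0:ℝ) ≤ ((n:ℝ)/τbar + c * b n - (K n : ℝ)) * (τbar - 1) :=
            mul_nonneg (by linarith) (by linarith)
          have hexp : ((n:ℝ)/τbar + c * b n - (K n : ℝ)) * (τbar - 1)
              = (n:ℝ) - (n:ℝ)/τbar + δ/2 * b n - c * b n
                - (K n : ℝ) * τbar + (K n : ℝ) := by
            linear_combination hAT + hcbT
          rw [hexp] at hprod
          linarith [hsum, hflle, hflN, hcbn, hprod, mul_nonneg hδ.le hbn.le]
        calc δ/4 * b n ≤ (τsum (K n) y : ℝ) - (K n : ℝ) * τbar := hdev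
        _ ≤ |(τsum (K n) y : ℝ) - (K n : ℝ) * τbar| := le_abs_self _
    -- conclude
    rw [abs_div, abs_of_pos hbK, le_div_iff₀ hbK]
    calc η * b (K n) = δ/4 * (ε * b (K n)) := by rw [hη]; ring
    _ ≤ δ/4 * b n := by
      have := mul_le_mul_of_nonneg_left hεb (by positivity : (0:ℝ) ≤ δ/4)
      linarith
    _ ≤ _ := key
  -- assemble
  have hcomp : Tendsto (fun n => μ {x | η ≤
      dist (((τsum (K n) x : ℝ) - (K n : ℝ) * τbar) / b (K n)) ((0 : Y → ℝ) x)})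
      atTop (𝓝 0) :=
    (tendstoInMeasure_iff_dist.mp hτconv η hηpos).comp hKtend
  refine tendsto_of_tendsto_of_tendsto_of_le_of_le' tendsto_const_nhds hcomp
    (Filter.Eventually.of_forall (fun n => zero_le)) hbound
end
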